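/- arXiv:1904.04171 — 5 statements merged into one kernel-verified Lean document; each statement's English description precedes it below -/
import Mathlib

section
/- Let $Y$ be a Polish space with metric $d$, $r \geq 1$, and let $p_1,\ldots,p_N, m_1,\ldots,m_N \in \mathcal{P}_r(Y)$ satisfy $\sum_{i=1}^N p_i = \sum_{i=1}^N m_i$. Suppose $(p_i^k)_{k}$ are sequences in $\mathcal{P}_r(Y)$ with $p_i^k \to p_i$ in the $r$-Wasserstein metric for each $i$. Then there exist sequences $(m_i^k)_k$ in $\mathcal{P}_r(Y)$ such that $\sum_{i=1}^N p_i^k = \sum_{i=1}^N m_i^k$ for each $k$ and $m_i^k \to m_i$ in the $r$-Wasserstein metric for each $i$. -/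
/-!
Let `μ = ∑ pᵢ = ∑ mⱼ` and `gⱼ = dmⱼ/dμ`, so that `∑ⱼ gⱼ = 1` `μ`-a.e. Choose couplings `πᵢᵏ` of
`pᵢᵏ` and `pᵢ` whose cost is within `1/(k+1)` of `W_r(pᵢᵏ, pᵢ)^r`, and reweight them by `gⱼ` in
the second variable: `ρⱼᵏ = ∑ᵢ gⱼ(y₂) πᵢᵏ` has second marginal `∑ᵢ gⱼ pᵢ = mⱼ`, the first
marginals `mⱼᵏ` of the `ρⱼᵏ` add up to `∑ᵢ pᵢᵏ`, and `ρⱼᵏ ≤ ∑ᵢ πᵢᵏ` bounds the cost of `ρⱼᵏ` by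
`∑ᵢ W_r(pᵢᵏ, pᵢ)^r + N/(k+1)`.
-/

open MeasureTheory Filter Topology

noncomputable section

/-- A coupling of `μ` and `ν`: a measure on the product with the given marginals. -/
def IsCoupling {X Y : Type*} [MeasurableSpace X] [MeasurableSpace Y]
    (π : Measure (X × Y)) (μ : Measure X) (ν : Measure Y) : Prop :=
  π.map Prod.fst = μ ∧ π.map Prod.snd = ν

/-- `WrPow r p q` is the `r`-th power of the `r`-Wasserstein distance:
`inf { ∫ d(y₁,y₂)^r dπ : π coupling of p, q }`. -/
noncomputable def WrPow {Y : Type*} [MeasurableSpace Y] [PseudoMetricSpace Y]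
    (r : ℝ) (p q : Measure Y) : ℝ :=
  sInf {v | ∃ π : Measure (Y × Y), IsCoupling π p q ∧ v = ∫ z, dist z.1 z.2 ^ r ∂π}

/-- Convergence in the `r`-Wasserstein metric. -/
def TendstoWr {Y : Type*} [MeasurableSpace Y] [PseudoMetricSpace Y]
    (r : ℝ) (pk : ℕ → Measure Y) (p : Measure Y) : Prop :=
  Tendsto (fun k => WrPow r (pk k) p) atTop (nhds 0)

/-- Finite `r`-th moment. -/
def FiniteMomentR {Y : Type*} [MeasurableSpace Y] [PseudoMetricSpace Y]
    (r : ℝ) (p : Measure Y) : Prop :=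
  ∃ y0 : Y, Integrable (fun y => dist y y0 ^ r) p

/-- Membership in `𝒫_r(Y)`: a probability measure with finite `r`-th moment. -/
def MemPr {Y : Type*} [MeasurableSpace Y] [PseudoMetricSpace Y]
    (r : ℝ) (p : Measure Y) : Prop :=
  IsProbabilityMeasure p ∧ FiniteMomentR r p

open scoped ENNReal

namespace MeasureTheory.Measure

variable {X Y ι : Type*} [MeasurableSpace X] [MeasurableSpace Y] [Fintype ι]

lemma le_finsetSum (μ : ι → Measure X) (i : ι) : μ i ≤ ∑ j, μ j :=
  Finset.single_le_sum (fun j _ => Measure.zero_le (μ j)) (Finset.mem_univ i)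

lemma map_finsetSum (μ : ι → Measure X) {f : X → Y} (hf : Measurable f) :
    (∑ i, μ i).map f = ∑ i, (μ i).map f := by
  simp only [← mapₗ_apply_of_measurable hf, _root_.map_sum]

lemma withDensity_finsetSum_measure (μ : ι → Measure X) (f : X → ℝ≥0∞) :
    (∑ i, μ i).withDensity f = ∑ i, (μ i).withDensity f := by
  rw [← sum_fintype, withDensity_sum, sum_fintype]

lemma withDensity_finsetSum (μ : Measure X) {f : ι → X → ℝ≥0∞} (hf : ∀ i, Measurable (f i)) :
    μ.withDensity (fun x => ∑ i, f i x) = ∑ i, μ.withDensity (f i) := by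
  rw [← sum_fintype, ← withDensity_tsum hf, tsum_fintype, Finset.sum_fn]

lemma map_withDensity_comp (μ : Measure X) {f : X → Y} (hf : Measurable f) {g : Y → ℝ≥0∞}
    (hg : Measurable g) : (μ.withDensity (g ∘ f)).map f = (μ.map f).withDensity g := by
  ext s hs
  rw [map_apply hf hs, withDensity_apply _ (hf hs), withDensity_apply _ hs,
    setLIntegral_map hs hg hf]
  rfl

end MeasureTheory.Measure

section Reweighting

variable {X Y ι κ : Type*} [MeasurableSpace X] [MeasurableSpace Y] [Fintype ι] [Fintype κ]

lemma IsCoupling.measure_univ_eq {π : Measure (X × Y)} {μ : Measure X}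
    {ν : Measure Y} (hπ : IsCoupling π μ ν) :
    μ Set.univ = ν Set.univ := by
  rw [← hπ.1, ← hπ.2, Measure.map_apply measurable_fst .univ,
    Measure.map_apply measurable_snd .univ, Set.preimage_univ, Set.preimage_univ]

lemma exists_withDensity_eq_and_sum_eq_one (m : κ → Measure Y) [∀ j, IsFiniteMeasure (m j)] :
    ∃ g : κ → Y → ℝ≥0∞, (∀ j, Measurable (g j)) ∧
      (∀ j, (∑ j', m j').withDensity (g j) = m j) ∧ ∀ᵐ y ∂(∑ j, m j), ∑ j, g j y = 1 := by
  set μ := ∑ j, m j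
  have hg : ∀ j, μ.withDensity ((m j).rnDeriv μ) = m j := fun j =>
    Measure.withDensity_rnDeriv_eq _ _ (Measure.le_finsetSum m j).absolutelyContinuous
  refine ⟨fun j => (m j).rnDeriv μ, fun j => Measure.measurable_rnDeriv _ _, hg, ?_⟩
  have hsum : μ.withDensity (fun y => ∑ j, (m j).rnDeriv μ y) = μ.withDensity 1 := by
    rw [Measure.withDensity_finsetSum _ fun j => Measure.measurable_rnDeriv _ _, withDensity_one]
    simp only [hg, μ]
  exact (withDensity_eq_iff_of_sigmaFinite (by fun_prop) aemeasurable_const).1 hsum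

lemma exists_reweighted_couplings {p' : ι → Measure X} {p : ι → Measure Y} {m : κ → Measure Y}
    [∀ j, IsFiniteMeasure (m j)] (hsum : ∑ i, p i = ∑ j, m j) (π : ι → Measure (X × Y))
    (hπ : ∀ i, IsCoupling (π i) (p' i) (p i)) :
    ∃ ρ : κ → Measure (X × Y), (∀ j, (ρ j).map Prod.snd = m j) ∧
      ∑ j, (ρ j).map Prod.fst = ∑ i, p' i ∧ ∀ j, ρ j ≤ ∑ i, π i := by
  obtain ⟨g, hg_meas, hg, hg_sum⟩ := exists_withDensity_eq_and_sum_eq_one m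
  have hπ_sum : ∀ i, ∑ j, (π i).withDensity (g j ∘ Prod.snd) = π i := by
    intro i
    have hp_le : p i ≤ ∑ j, m j := hsum ▸ Measure.le_finsetSum p i
    have hae : (fun z => ∑ j, (g j ∘ Prod.snd) z) =ᵐ[π i] 1 :=
      ae_of_ae_map (p := fun y => ∑ j, g j y = 1) measurable_snd.aemeasurable
        ((hπ i).2 ▸ hp_le.absolutelyContinuous.ae_le hg_sum)
    rw [← Measure.withDensity_finsetSum _ fun j => (hg_meas j).comp measurable_snd,
      withDensity_congr_ae hae, withDensity_one]
  refine ⟨fun j => ∑ i, (π i).withDensity (g j ∘ Prod.snd), fun j => ?_, ?_, fun j => ?_⟩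
  · simp only [Measure.map_finsetSum _ measurable_snd,
      Measure.map_withDensity_comp _ measurable_snd (hg_meas j), (hπ _).2]
    rw [← Measure.withDensity_finsetSum_measure, hsum, hg]
  · rw [← Measure.map_finsetSum _ measurable_fst, Finset.sum_comm]
    simp only [hπ_sum, Measure.map_finsetSum _ measurable_fst, (hπ _).1]
  · calc ∑ i, (π i).withDensity (g j ∘ Prod.snd)
        ≤ ∑ i, ∑ j, (π i).withDensity (g j ∘ Prod.snd) :=
          Finset.sum_le_sum fun i _ => Measure.le_finsetSum (fun j => (π i).withDensity _) j
      _ = ∑ i, π i := by simp only [hπ_sum]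

end Reweighting

lemma Real.rpow_le_two_rpow_mul_add {r a b c : ℝ} (hr : 0 ≤ r) (ha : 0 ≤ a) (hb : 0 ≤ b)
    (hc : 0 ≤ c) (h : a ≤ b + c) : a ^ r ≤ 2 ^ r * (b ^ r + c ^ r) := by
  calc a ^ r ≤ (2 * max b c) ^ r :=
        Real.rpow_le_rpow ha (h.trans (by linarith [le_max_left b c, le_max_right b c])) hr
    _ = 2 ^ r * max b c ^ r := Real.mul_rpow zero_le_two (hb.trans (le_max_left b c))
    _ ≤ 2 ^ r * (b ^ r + c ^ r) := by
        gcongr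
        rcases max_choice b c with h | h <;> rw [h]
        · linarith [Real.rpow_nonneg hc r]
        · linarith [Real.rpow_nonneg hb r]

section Wasserstein

variable {Y : Type*} [MeasurableSpace Y] [PseudoMetricSpace Y] {r : ℝ}

lemma WrPow_nonneg (p q : Measure Y) : 0 ≤ WrPow r p q :=
  Real.sInf_nonneg <| by
    rintro v ⟨π, -, rfl⟩
    exact integral_nonneg fun z => Real.rpow_nonneg dist_nonneg r

lemma WrPow_le_integral {p q : Measure Y} {π : Measure (Y × Y)} (hπ : IsCoupling π p q) :
    WrPow r p q ≤ ∫ z, dist z.1 z.2 ^ r ∂π := by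
  refine csInf_le ⟨0, ?_⟩ ⟨π, hπ, rfl⟩
  rintro v ⟨π', -, rfl⟩
  exact integral_nonneg fun z => Real.rpow_nonneg dist_nonneg r

lemma exists_isCoupling_integral_lt (p q : Measure Y) [IsProbabilityMeasure p]
    [IsProbabilityMeasure q] {ε : ℝ} (hε : 0 < ε) :
    ∃ π, IsCoupling π p q ∧ ∫ z, dist z.1 z.2 ^ r ∂π < WrPow r p q + ε := by
  have hne : {v | ∃ π : Measure (Y × Y), IsCoupling π p q ∧
      v = ∫ z, dist z.1 z.2 ^ r ∂π}.Nonempty := ⟨_, p.prod q, ⟨by simp, by simp⟩, rfl⟩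
  obtain ⟨-, ⟨π, hπ, rfl⟩, hlt⟩ := Real.lt_sInf_add_pos hne hε
  exact ⟨π, hπ, hlt⟩

lemma WrPow_le_sum_integral {ι : Type*} [Fintype ι] {ρ : Measure (Y × Y)} {p q : Measure Y}
    (hρ : IsCoupling ρ p q) {π : ι → Measure (Y × Y)} (hle : ρ ≤ ∑ i, π i)
    (hπ : ∀ i, Integrable (fun z : Y × Y => dist z.1 z.2 ^ r) (π i)) :
    WrPow r p q ≤ ∑ i, ∫ z, dist z.1 z.2 ^ r ∂π i := by
  calc WrPow r p q ≤ ∫ z, dist z.1 z.2 ^ r ∂ρ := WrPow_le_integral hρ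
    _ ≤ ∫ z, dist z.1 z.2 ^ r ∂(∑ i, π i) :=
        integral_mono_measure hle (.of_forall fun z => Real.rpow_nonneg dist_nonneg r)
          (integrable_finsetSum_measure.2 fun i _ => hπ i)
    _ = ∑ i, ∫ z, dist z.1 z.2 ^ r ∂π i := integral_finsetSum_measure fun i _ => hπ i

lemma FiniteMomentR.mono {p q : Measure Y} (hpq : p ≤ q) (hq : FiniteMomentR r q) :
    FiniteMomentR r p :=
  hq.imp fun _ h => h.mono_measure hpq

variable [OpensMeasurableSpace Y]

lemma FiniteMomentR.integrable (hr : 0 ≤ r) {p : Measure Y} [IsFiniteMeasure p]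
    (hp : FiniteMomentR r p) (y : Y) : Integrable (fun x => dist x y ^ r) p := by
  obtain ⟨y0, hy0⟩ := hp
  refine ((hy0.const_mul (2 ^ r)).add (integrable_const (2 ^ r * dist y0 y ^ r))).mono'
    (by fun_prop) (.of_forall fun x => ?_)
  rw [Real.norm_of_nonneg (Real.rpow_nonneg dist_nonneg r), Pi.add_apply, ← mul_add]
  exact Real.rpow_le_two_rpow_mul_add hr dist_nonneg dist_nonneg dist_nonneg
    (dist_triangle x y0 y)

lemma FiniteMomentR.finsetSum {ι : Type*} [Fintype ι] [Nonempty Y] (hr : 0 ≤ r)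
    {p : ι → Measure Y} [∀ i, IsFiniteMeasure (p i)] (hp : ∀ i, FiniteMomentR r (p i)) :
    FiniteMomentR r (∑ i, p i) :=
  ⟨Classical.arbitrary Y, integrable_finsetSum_measure.2 fun i _ => (hp i).integrable hr _⟩

lemma IsCoupling.integrable_dist_rpow [SecondCountableTopology Y] (hr : 0 ≤ r)
    {π : Measure (Y × Y)} {p q : Measure Y} [IsFiniteMeasure q] (hπ : IsCoupling π p q)
    (hp : FiniteMomentR r p) (hq : FiniteMomentR r q) :
    Integrable (fun z : Y × Y => dist z.1 z.2 ^ r) π := by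
  obtain ⟨y0, hy0⟩ := hp
  have h₁ : Integrable (fun z : Y × Y => dist z.1 y0 ^ r) π :=
    (hπ.1 ▸ hy0).comp_measurable measurable_fst
  have h₂ : Integrable (fun z : Y × Y => dist z.2 y0 ^ r) π :=
    (hπ.2 ▸ hq.integrable hr y0).comp_measurable measurable_snd
  refine ((h₁.add h₂).const_mul (2 ^ r)).mono' (by fun_prop) (.of_forall fun z => ?_)
  rw [Real.norm_of_nonneg (Real.rpow_nonneg dist_nonneg r)]
  exact Real.rpow_le_two_rpow_mul_add hr dist_nonneg dist_nonneg dist_nonneg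
    (dist_triangle_right z.1 z.2 y0)

end Wasserstein

/-- **Approximative sequence lemma** (Lemma 3.3). -/
theorem approximative_sequence {Y : Type*} [MeasurableSpace Y] [MetricSpace Y]
    [PolishSpace Y] [BorelSpace Y]
    (r : ℝ) (hr : 1 ≤ r) (N : ℕ)
    (p m : Fin N → Measure Y)
    (hp : ∀ i, MemPr r (p i)) (hm : ∀ i, MemPr r (m i))
    (hsum : ∑ i, p i = ∑ i, m i)
    (pk : ℕ → Fin N → Measure Y)
    (hpk : ∀ k i, MemPr r (pk k i))
    (hconv : ∀ i, TendstoWr r (fun k => pk k i) (p i)) :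
    ∃ mk : ℕ → Fin N → Measure Y,
      (∀ k i, MemPr r (mk k i)) ∧
      (∀ k, ∑ i, pk k i = ∑ i, mk k i) ∧
      (∀ i, TendstoWr r (fun k => mk k i) (m i)) := by
  have hr0 : 0 ≤ r := zero_le_one.trans hr
  have := fun k i => (hpk k i).1
  have := fun i => (hp i).1
  have := fun j => (hm j).1
  choose π hπ hπ_lt using fun (k : ℕ) (i : Fin N) =>
    exists_isCoupling_integral_lt (r := r) (pk k i) (p i) (Nat.one_div_pos_of_nat (n := k))
  choose ρ hρ_snd hρ_fst hρ_le using fun k => exists_reweighted_couplings hsum (π k) (hπ k)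
  have hρ : ∀ k j, IsCoupling (ρ k j) ((ρ k j).map Prod.fst) (m j) := fun k j => ⟨rfl, hρ_snd k j⟩
  have hπ_int : ∀ k i, Integrable (fun z : Y × Y => dist z.1 z.2 ^ r) (π k i) := fun k i =>
    (hπ k i).integrable_dist_rpow hr0 (hpk k i).2 (hp i).2
  refine ⟨fun k j => (ρ k j).map Prod.fst, fun k j => ⟨?_, ?_⟩, fun k => (hρ_fst k).symm,
    fun j => ?_⟩
  · exact ⟨by rw [(hρ k j).measure_univ_eq, measure_univ]⟩
  · have : Nonempty Y := ⟨(hm j).2.choose⟩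
    refine (FiniteMomentR.finsetSum hr0 fun i => (hpk k i).2).mono ?_
    exact hρ_fst k ▸ Measure.le_finsetSum (fun j => (ρ k j).map Prod.fst) j
  · have hbound : Tendsto (fun k : ℕ => ∑ i, (WrPow r (pk k i) (p i) + 1 / ((k : ℝ) + 1)))
        atTop (𝓝 0) := by
      simpa using tendsto_finsetSum _ fun i _ =>
        (hconv i).add tendsto_one_div_add_atTop_nhds_zero_nat
    exact squeeze_zero (fun k => WrPow_nonneg _ _) (fun k =>
      (WrPow_le_sum_integral (hρ k j) (hρ_le k j) (hπ_int k)).trans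
        (Finset.sum_le_sum fun i _ => (hπ_lt k i).le)) hbound
end
end

section
/- Let $X = \{0\}$, $Y = \{0,1\}$, $\mu = \delta_0$, $\nu = \frac12(\delta_0 + \delta_1)$, and define $C(x,p) = \min(p(\{0\}), p(\{1\}))$ for $p \in \mathcal{P}(Y)$. Then the unique coupling $\mu \otimes \nu \in \Pi(\mu,\nu)$ is not $C$-monotone; specifically, $2\,C(0,\nu) = 1 > 0 = C(0,\delta_0) + C(0,\delta_1)$, even though $C$ is continuous and concave in its second argument. -/
open MeasureTheory Filter Topology

noncomputable section

/-- `C`-monotonicity of a coupling given by first marginal `μ` and disintegration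
kernel `κ`: there is a `μ`-full set `Γ` such that for all finitely many `x_i ∈ Γ`
and competitor probability measures `q_i` with `∑ κ(x_i) = ∑ q_i`, the `C`-cost of
the `κ(x_i)` does not exceed that of the `q_i`. -/
def CMonotoneKernel {X Y : Type*} [MeasurableSpace X] [MeasurableSpace Y]
    (C : X → Measure Y → ℝ) (μ : Measure X) (κ : X → Measure Y) : Prop :=
  ∃ Γ : Set X, MeasurableSet Γ ∧ μ Γᶜ = 0 ∧
    ∀ (N : ℕ) (x : Fin N → X) (q : Fin N → Measure Y),
      (∀ i, x i ∈ Γ) → (∀ i, IsProbabilityMeasure (q i)) →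
      (∑ i, κ (x i)) = (∑ i, q i) →
      (∑ i, C (x i) (κ (x i))) ≤ ∑ i, C (x i) (q i)

/-- The cost `C(p) = min(p({0}), p({1}))` of Example 6.1. -/
noncomputable def Cmin (p : Measure ℝ) : ℝ :=
  min (p {0}).toReal (p {1}).toReal

lemma nu_apply_0 : (((2 : ENNReal)⁻¹ • (Measure.dirac (0:ℝ) + Measure.dirac 1) : Measure ℝ)) {0} = (2⁻¹ : ENNReal) := by
  rw [Measure.smul_apply, Measure.add_apply,
    Measure.dirac_apply' _ (measurableSet_singleton _),
    Measure.dirac_apply' _ (measurableSet_singleton _)]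
  simp

lemma nu_apply_1 : (((2 : ENNReal)⁻¹ • (Measure.dirac (0:ℝ) + Measure.dirac 1) : Measure ℝ)) {1} = (2⁻¹ : ENNReal) := by
  rw [Measure.smul_apply, Measure.add_apply,
    Measure.dirac_apply' _ (measurableSet_singleton _),
    Measure.dirac_apply' _ (measurableSet_singleton _)]
  simp

lemma Cmin_nu : Cmin ((2 : ENNReal)⁻¹ • (Measure.dirac (0:ℝ) + Measure.dirac 1)) = 2⁻¹ := by
  unfold Cmin
  rw [nu_apply_0, nu_apply_1]
  simp [ENNReal.toReal_inv]

lemma Cmin_d0 : Cmin (Measure.dirac (0:ℝ)) = 0 := by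
  unfold Cmin
  rw [Measure.dirac_apply' _ (measurableSet_singleton _),
    Measure.dirac_apply' _ (measurableSet_singleton _)]
  norm_num

lemma Cmin_d1 : Cmin (Measure.dirac (1:ℝ)) = 0 := by
  unfold Cmin
  rw [Measure.dirac_apply' _ (measurableSet_singleton _),
    Measure.dirac_apply' _ (measurableSet_singleton _)]
  norm_num

/-- **Example 6.1**: with `X = {0}`, `μ = δ₀`, `ν = ½(δ₀ + δ₁)` and
`C(x,p) = min(p({0}),p({1}))` (continuous and concave in `p`), the unique coupling
`μ ⊗ ν` (whose disintegration kernel is constantly `ν`) is not `C`-monotone;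
specifically `2 C(ν) = 1 > 0 = C(δ₀) + C(δ₁)`. -/
theorem example_concave_not_CMonotone :
    let μ : Measure ℝ := Measure.dirac 0
    let ν : Measure ℝ := (2 : ENNReal)⁻¹ • (Measure.dirac 0 + Measure.dirac 1)
    ¬ CMonotoneKernel (fun _ p => Cmin p) μ (fun _ => ν) ∧
    2 * Cmin ν = 1 ∧
    Cmin (Measure.dirac 0) + Cmin (Measure.dirac 1) = 0 ∧ (0 : ℝ) < 1 := by
  intro μ ν
  refine ⟨?_, by rw [Cmin_nu]; norm_num, by rw [Cmin_d0, Cmin_d1]; norm_num, by norm_num⟩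
  rintro ⟨Γ, hΓm, hΓ0, h⟩
  have h0 : (0:ℝ) ∈ Γ := by
    by_contra h0
    rw [show μ = Measure.dirac 0 from rfl, Measure.dirac_apply' _ hΓm.compl] at hΓ0
    simp [Set.indicator_of_mem (Set.mem_compl h0)] at hΓ0
  have key := h 2 (fun _ => 0) (![Measure.dirac 0, Measure.dirac 1])
    (fun _ => h0)
    (fun i => by fin_cases i <;> exact Measure.dirac.isProbabilityMeasure)
    (by
      rw [Fin.sum_univ_two, Fin.sum_univ_two]
      show ν + ν = Measure.dirac 0 + Measure.dirac 1
      rw [show ν = (2 : ENNReal)⁻¹ • (Measure.dirac 0 + Measure.dirac 1) from rfl]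
      rw [← two_smul ENNReal, smul_smul]
      have h2 : (2 : ENNReal) * 2⁻¹ = 1 := by
        rw [ENNReal.mul_inv_cancel] <;> norm_num
      rw [h2, one_smul])
  rw [Fin.sum_univ_two, Fin.sum_univ_two] at key
  simp only [Matrix.cons_val_zero, Matrix.cons_val_one, Matrix.head_cons] at key
  rw [Cmin_nu, Cmin_d0, Cmin_d1] at key
  norm_num at key
end
end

section
/- Let $C : X \times \mathcal{P}(Y) \to \mathbb{R}$ satisfy: $\Gamma \subset X\times\mathcal{P}(Y)$ is $C$-monotone and for every $x$, $p \mapsto C(x,p)$ is convex. Then the enlarged set $\tilde\Gamma := \Gamma \cup \{(x, \frac1k\sum_{i=1}^k p_i) : x\in X,\ (x,p_i)\in\Gamma \text{ for } i=1,\ldots,k,\ k\in\mathbb{N}\}$ is also $C$-monotone. -/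
open MeasureTheory Filter Topology

noncomputable section

/-- A set `Γ ⊆ X × 𝒫(Y)` is `C`-monotone if for all finitely many `(x_i,p_i) ∈ Γ`
and competitor probability measures `q_i` with `∑ p_i = ∑ q_i`, the `C`-cost of the
`p_i` does not exceed that of the `q_i`. -/
def CMonotoneSet {X Y : Type*} [MeasurableSpace Y]
    (C : X → Measure Y → ℝ) (Γ : Set (X × Measure Y)) : Prop :=
  ∀ (N : ℕ) (x : Fin N → X) (p q : Fin N → Measure Y),
    (∀ i, (x i, p i) ∈ Γ) → (∀ i, IsProbabilityMeasure (q i)) →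
    (∑ i, p i) = (∑ i, q i) →
    (∑ i, C (x i) (p i)) ≤ ∑ i, C (x i) (q i)

/-!
Write each point `(x_i, p_i)` of the enlarged set as a uniform average `p_i = k_i⁻¹ ∑_j P_ij`
with `(x_i, P_ij) ∈ Γ` (for points of `Γ` take `k_i = 1`). Repeating every `P_ij` `K / k_i`
times and every `q_i` `K` times, where `K = ∏ k_i`, gives two families of equal total mass
`K ∑ p_i = K ∑ q_i`, so `C`-monotonicity of `Γ` yields
`∑_i k_i⁻¹ ∑_j C(x_i, P_ij) ≤ ∑_i C(x_i, q_i)`. Jensen's inequality for the convex map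
`C(x_i, ·)` bounds `C(x_i, p_i)` by `k_i⁻¹ ∑_j C(x_i, P_ij)`.
-/

open scoped NNReal ENNReal

section Convexity

variable {Y : Type*} [MeasurableSpace Y]

def ConvexOnProbabilityMeasures (c : Measure Y → ℝ) : Prop :=
  ∀ p q : Measure Y, IsProbabilityMeasure p → IsProbabilityMeasure q → ∀ a b : ℝ≥0, a + b = 1 →
    c ((a : ℝ≥0∞) • p + (b : ℝ≥0∞) • q) ≤ a * c p + b * c q

theorem isProbabilityMeasure_inv_natCast_smul_sum {k : ℕ} (hk : k ≠ 0) (P : Fin k → Measure Y)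
    (hP : ∀ j, IsProbabilityMeasure (P j)) : IsProbabilityMeasure ((k : ℝ≥0∞)⁻¹ • ∑ j, P j) :=
  ⟨by simp [ENNReal.inv_mul_cancel (Nat.cast_ne_zero.2 hk) (ENNReal.natCast_ne_top k)]⟩

theorem inv_natCast_smul_sum_fin_succ {M : Type*} [AddCommMonoid M] [Module ℝ≥0∞ M] {k : ℕ}
    (hk : k ≠ 0) (P : Fin (k + 1) → M) :
    ((k + 1 : ℕ) : ℝ≥0∞)⁻¹ • ∑ j, P j =
      ((k * ((k + 1 : ℕ) : ℝ≥0)⁻¹ : ℝ≥0) : ℝ≥0∞) • ((k : ℝ≥0∞)⁻¹ • ∑ j : Fin k, P j.castSucc) +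
        ((((k + 1 : ℕ) : ℝ≥0)⁻¹ : ℝ≥0) : ℝ≥0∞) • P (Fin.last k) := by
  have hinv : ((((k + 1 : ℕ) : ℝ≥0)⁻¹ : ℝ≥0) : ℝ≥0∞) = ((k + 1 : ℕ) : ℝ≥0∞)⁻¹ := by
    rw [ENNReal.coe_inv (Nat.cast_ne_zero.2 k.succ_ne_zero), ENNReal.coe_natCast]
  rw [Fin.sum_univ_castSucc, smul_add, smul_smul, ENNReal.coe_mul, ENNReal.coe_natCast, hinv,
    mul_comm (k : ℝ≥0∞), mul_assoc,
    ENNReal.mul_inv_cancel (Nat.cast_ne_zero.2 hk) (ENNReal.natCast_ne_top k), mul_one]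

theorem ConvexOnProbabilityMeasures.apply_average_le {c : Measure Y → ℝ}
    (hc : ConvexOnProbabilityMeasures c) {k : ℕ} (hk : k ≠ 0) (P : Fin k → Measure Y)
    (hP : ∀ j, IsProbabilityMeasure (P j)) :
    c ((k : ℝ≥0∞)⁻¹ • ∑ j, P j) ≤ (k : ℝ)⁻¹ * ∑ j, c (P j) := by
  rw [le_inv_mul_iff₀ (by positivity)]
  induction k, Nat.one_le_iff_ne_zero.2 hk using Nat.le_induction with
  | base => simp
  | succ k hk1 ih =>
    have hk : k ≠ 0 := Nat.one_le_iff_ne_zero.1 hk1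
    set μ := (k : ℝ≥0∞)⁻¹ • ∑ j : Fin k, P j.castSucc
    set b : ℝ≥0 := ((k + 1 : ℕ) : ℝ≥0)⁻¹
    have hab : k * b + b = 1 := by
      rw [← add_one_mul, ← Nat.cast_add_one, mul_inv_cancel₀ (Nat.cast_ne_zero.2 k.succ_ne_zero)]
    have hstep := hc μ _ (isProbabilityMeasure_inv_natCast_smul_sum hk _ fun j ↦ hP _)
      (hP (Fin.last k)) _ _ hab
    rw [← inv_natCast_smul_sum_fin_succ hk] at hstep
    calc ((k + 1 : ℕ) : ℝ) * c (((k + 1 : ℕ) : ℝ≥0∞)⁻¹ • ∑ j, P j)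
        ≤ ((k + 1 : ℕ) : ℝ) * ((k * b : ℝ≥0) * c μ + b * c (P (Fin.last k))) := by gcongr
      _ = k * c μ + c (P (Fin.last k)) := by
        simp only [b]
        push_cast
        field_simp
      _ ≤ ∑ j : Fin k, c (P j.castSucc) + c (P (Fin.last k)) := by
        gcongr
        exact ih hk _ fun j ↦ hP _
      _ = ∑ j, c (P j) := (Fin.sum_univ_castSucc fun j ↦ c (P j)).symm

end Convexity

section Monotonicity

variable {X Y : Type*} [MeasurableSpace Y] {C : X → Measure Y → ℝ} {Γ : Set (X × Measure Y)}

theorem CMonotoneSet.sum_le {ι : Type*} [Fintype ι] (hΓ : CMonotoneSet C Γ) (x : ι → X)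
    (p q : ι → Measure Y) (hp : ∀ i, (x i, p i) ∈ Γ) (hq : ∀ i, IsProbabilityMeasure (q i))
    (h : ∑ i, p i = ∑ i, q i) : ∑ i, C (x i) (p i) ≤ ∑ i, C (x i) (q i) := by
  let e := (Fintype.equivFin ι).symm
  have := hΓ _ (fun i ↦ x (e i)) (fun i ↦ p (e i)) (fun i ↦ q (e i)) (fun _ ↦ hp _)
    (fun _ ↦ hq _) (by rwa [e.sum_comp p, e.sum_comp q])
  rwa [e.sum_comp (fun i ↦ C (x i) (p i)), e.sum_comp (fun i ↦ C (x i) (q i))] at this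

theorem CMonotoneSet.sum_nsmul_le {ι : Type*} [Fintype ι] (hΓ : CMonotoneSet C Γ) (x : ι → X)
    (n : ι → ℕ) (p q : ι → Measure Y) (hp : ∀ i, (x i, p i) ∈ Γ)
    (hq : ∀ i, IsProbabilityMeasure (q i)) (h : ∑ i, n i • p i = ∑ i, n i • q i) :
    ∑ i, (n i : ℝ) * C (x i) (p i) ≤ ∑ i, (n i : ℝ) * C (x i) (q i) := by
  have := hΓ.sum_le (fun z : Σ i, Fin (n i) ↦ x z.1) (fun z ↦ p z.1) (fun z ↦ q z.1)
    (fun _ ↦ hp _) (fun _ ↦ hq _)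
    (by simpa only [Fintype.sum_sigma, Finset.sum_const, Finset.card_univ, Fintype.card_fin])
  simpa only [Fintype.sum_sigma, Finset.sum_const, Finset.card_univ, Fintype.card_fin,
    nsmul_eq_mul] using this

theorem CMonotoneSet.sum_inv_mul_sum_le {ι : Type*} [Fintype ι] (hΓ : CMonotoneSet C Γ)
    (x : ι → X) (k : ι → ℕ) (hk : ∀ i, k i ≠ 0) (P : ∀ i, Fin (k i) → Measure Y)
    (q : ι → Measure Y) (hP : ∀ i j, (x i, P i j) ∈ Γ) (hq : ∀ i, IsProbabilityMeasure (q i))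
    (h : ∑ i, (k i : ℝ≥0∞)⁻¹ • ∑ j, P i j = ∑ i, q i) :
    ∑ i, (k i : ℝ)⁻¹ * ∑ j, C (x i) (P i j) ≤ ∑ i, C (x i) (q i) := by
  classical
  set K := ∏ i, k i
  set m : ι → ℕ := fun i ↦ ∏ i' ∈ Finset.univ.erase i, k i'
  have hmk (i : ι) : m i * k i = K := Finset.prod_erase_mul _ _ (Finset.mem_univ i)
  have hkR (i : ι) : (k i : ℝ) ≠ 0 := Nat.cast_ne_zero.2 (hk i)
  have hK : 0 < (K : ℝ) := Nat.cast_pos.2 (Finset.prod_pos fun i _ ↦ Nat.pos_of_ne_zero (hk i))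
  have hmR (i : ι) : (m i : ℝ) = K * (k i : ℝ)⁻¹ := by
    rw [← hmk, Nat.cast_mul, mul_inv_cancel_right₀ (hkR i)]
  have hmE (i : ι) : (m i : ℝ≥0∞) = K * (k i : ℝ≥0∞)⁻¹ := by
    rw [← hmk, Nat.cast_mul, ENNReal.mul_inv_cancel_right (by exact_mod_cast hk i)
      (ENNReal.natCast_ne_top _)]
  have hcopies := hΓ.sum_nsmul_le (fun z : Σ i, Fin (k i) ↦ x z.1) (fun z ↦ m z.1)
    (fun z ↦ P z.1 z.2) (fun z ↦ q z.1) (fun _ ↦ hP _ _) (fun _ ↦ hq _) (by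
      calc ∑ z : Σ i, Fin (k i), m z.1 • P z.1 z.2
          = (K : ℝ≥0∞) • ∑ i, (k i : ℝ≥0∞)⁻¹ • ∑ j, P i j := by
            simp only [Fintype.sum_sigma, ← Nat.cast_smul_eq_nsmul ℝ≥0∞, hmE, Finset.smul_sum,
              smul_smul]
        _ = (K : ℝ≥0∞) • ∑ i, q i := by rw [h]
        _ = ∑ z : Σ i, Fin (k i), m z.1 • q z.1 := by
            simp only [Fintype.sum_sigma, Finset.sum_const, Finset.card_univ, Fintype.card_fin,
              smul_smul, Finset.smul_sum, Nat.cast_smul_eq_nsmul, mul_comm (k _), hmk])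
  simp only [Fintype.sum_sigma, ← Finset.mul_sum, Finset.sum_const, Finset.card_univ,
    Fintype.card_fin, nsmul_eq_mul, hmR, mul_assoc, inv_mul_cancel_left₀ (hkR _)] at hcopies
  exact le_of_mul_le_mul_left hcopies hK

end Monotonicity

/-- **Remark 2.2 (b)**: if `Γ` is `C`-monotone and `C(x,·)` is convex for every `x`,
then the set enlarged by all finite uniform averages `(x, k⁻¹ ∑ᵢ pᵢ)` with
`(x,pᵢ) ∈ Γ` is also `C`-monotone. -/
theorem enlarged_CMonotone {X Y : Type*} [MeasurableSpace Y]
    (C : X → Measure Y → ℝ) (Γ : Set (X × Measure Y))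
    (hΓprob : ∀ xp ∈ Γ, IsProbabilityMeasure xp.2)
    (hconvex : ∀ (x : X) (p q : Measure Y), IsProbabilityMeasure p →
      IsProbabilityMeasure q → ∀ a b : NNReal, a + b = 1 →
      C x ((a : ENNReal) • p + (b : ENNReal) • q) ≤ a * C x p + b * C x q)
    (hmono : CMonotoneSet C Γ) :
    CMonotoneSet C
      (Γ ∪ {xp | ∃ (k : ℕ) (_ : 0 < k) (p : Fin k → Measure Y),
        (∀ i, (xp.1, p i) ∈ Γ) ∧ xp.2 = (k : ENNReal)⁻¹ • ∑ i, p i}) := by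
  intro N x p q hp hq hsum
  have hp_average (i : Fin N) : ∃ k ≠ 0, ∃ P : Fin k → Measure Y,
      (∀ j, (x i, P j) ∈ Γ) ∧ p i = (k : ℝ≥0∞)⁻¹ • ∑ j, P j := by
    rcases hp i with hΓ | ⟨k, hk, P, hPΓ, hP⟩
    · exact ⟨1, one_ne_zero, fun _ ↦ p i, fun _ ↦ hΓ, by simp⟩
    · exact ⟨k, hk.ne', P, hPΓ, hP⟩
  choose k hk P hPΓ hpP using hp_average
  calc ∑ i, C (x i) (p i) ≤ ∑ i, (k i : ℝ)⁻¹ * ∑ j, C (x i) (P i j) :=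
        Finset.sum_le_sum fun i _ ↦ hpP i ▸ ConvexOnProbabilityMeasures.apply_average_le
          (hconvex (x i)) (hk i) (P i) fun j ↦ hΓprob _ (hPΓ i j)
    _ ≤ ∑ i, C (x i) (q i) :=
        hmono.sum_inv_mul_sum_le x k hk P q hPΓ hq (by simpa only [hpP] using hsum)
end
end

section
/- Let $\mu_k, \nu_k, \mu, \nu \in \mathcal{P}_1(\mathbb{R})$ with $\mu_k\to\mu$, $\nu_k\to\nu$ in $\mathcal{W}_1$, and let $\pi_k \in \Pi_M(\mu_k,\nu_k)$ converge weakly to $\pi \in \mathcal{P}(\mathbb{R}^2)$. Then $\pi \in \Pi_M(\mu,\nu)$, i.e., the martingale property passes to the limit: $\int y\,\pi_x(dy) = x$ for $\mu$-a.e. $x$. -/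
open MeasureTheory Filter Topology

noncomputable section

/-- A martingale coupling of `μ` and `ν` on `ℝ`, encoded by a measurable Markov
disintegration kernel whose barycenter is the identity `μ`-a.s. -/
def IsMartCoupling (μ ν : Measure ℝ) (π : Measure (ℝ × ℝ)) : Prop :=
  ∃ κ : ℝ → Measure ℝ, Measurable κ ∧ (∀ x, IsProbabilityMeasure (κ x)) ∧
    π = μ.bind (fun x => (κ x).map (fun y => (x, y))) ∧
    π.map Prod.snd = ν ∧ (∀ᵐ x ∂μ, ∫ y, y ∂(κ x) = x)


/-!
W₁-convergence gives convergence of the integrals of Lipschitz functions, hence weak convergence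
of `μₖ` and `νₖ`; since push-forward along the coordinate projections is weakly continuous, the
marginals of `π` are `μ` and `ν`.

The martingale property of a coupling with integrable marginals is equivalent to
`∫ g(x) (y - x) dπ = 0` for every bounded continuous `g` (the converse direction disintegrates `π`
and tests the barycentre against smooth compactly supported `g`). The integrand is continuous but
unbounded. It is dominated by `φ(x, y) = ‖g‖ (|x| + |y|)`, and `∫ φ dπₖ` is a combination of the
first moments of `μₖ`, `νₖ`, which converge by W₁-convergence. Integrals of continuous `u ≥ 0` are
lower semicontinuous under weak convergence (truncate `u` at height `n`); applied to `φ ± h` this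
gives `∫ h dπₖ → ∫ h dπ` for every continuous `h` with `|h| ≤ φ`, so the identity passes to `π`.
-/

open ProbabilityTheory
open scoped BoundedContinuousFunction

namespace IsCoupling

variable {X Y : Type*} [MeasurableSpace X] [MeasurableSpace Y] {γ : Measure (X × Y)}
  {p : Measure X} {q : Measure Y}

lemma integrable_comp_fst (hγ : IsCoupling γ p q) {f : X → ℝ} (hf : Integrable f p) :
    Integrable (fun z => f z.1) γ := by
  rw [← hγ.1] at hf
  exact hf.comp_measurable measurable_fst

lemma integrable_comp_snd (hγ : IsCoupling γ p q) {f : Y → ℝ} (hf : Integrable f q) :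
    Integrable (fun z => f z.2) γ := by
  rw [← hγ.2] at hf
  exact hf.comp_measurable measurable_snd

lemma integral_comp_fst (hγ : IsCoupling γ p q) {f : X → ℝ} (hf : AEStronglyMeasurable f p) :
    ∫ z, f z.1 ∂γ = ∫ x, f x ∂p := by
  rw [← hγ.1] at hf ⊢
  exact (integral_map measurable_fst.aemeasurable hf).symm

lemma integral_comp_snd (hγ : IsCoupling γ p q) {f : Y → ℝ} (hf : AEStronglyMeasurable f q) :
    ∫ z, f z.2 ∂γ = ∫ y, f y ∂q := by
  rw [← hγ.2] at hf ⊢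
  exact (integral_map measurable_snd.aemeasurable hf).symm

lemma isProbabilityMeasure [IsProbabilityMeasure p] (hγ : IsCoupling γ p q) :
    IsProbabilityMeasure γ := by
  have : IsProbabilityMeasure (γ.map Prod.fst) := by rwa [hγ.1]
  exact Measure.isProbabilityMeasure_of_map Prod.fst

end IsCoupling

section Wasserstein

variable {Y : Type*} [PseudoMetricSpace Y] [MeasurableSpace Y] [OpensMeasurableSpace Y]
  {p q : Measure Y} {L : NNReal} {f : Y → ℝ}

lemma FiniteMomentR.integrable_of_lipschitzWith [IsFiniteMeasure p] (hp : FiniteMomentR 1 p)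
    (hf : LipschitzWith L f) : Integrable f p := by
  obtain ⟨y₀, hy₀⟩ := hp
  simp only [Real.rpow_one] at hy₀
  refine ((integrable_const |f y₀|).add (hy₀.const_mul L)).mono'
    hf.continuous.aestronglyMeasurable (ae_of_all _ fun y => ?_)
  have := hf.dist_le_mul y y₀
  rw [Real.dist_eq] at this
  rw [Real.norm_eq_abs, Pi.add_apply]
  linarith [abs_sub_abs_le_abs_sub (f y) (f y₀)]

variable [SecondCountableTopology Y]

lemma IsCoupling.integrable_dist [IsFiniteMeasure p] [IsFiniteMeasure q]
    (hp : FiniteMomentR 1 p) (hq : FiniteMomentR 1 q) {γ : Measure (Y × Y)}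
    (hγ : IsCoupling γ p q) : Integrable (fun z : Y × Y => dist z.1 z.2) γ := by
  obtain ⟨y₀, hy₀⟩ := hp
  have h₁ := hγ.integrable_comp_fst
    (FiniteMomentR.integrable_of_lipschitzWith ⟨y₀, hy₀⟩ (LipschitzWith.dist_left y₀))
  have h₂ := hγ.integrable_comp_snd (hq.integrable_of_lipschitzWith (LipschitzWith.dist_left y₀))
  exact (h₁.add h₂).mono' (continuous_fst.dist continuous_snd).aestronglyMeasurable
    (ae_of_all _ fun z => by
      simpa [Real.norm_eq_abs, abs_of_nonneg dist_nonneg] using dist_triangle_right z.1 z.2 y₀)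

lemma IsCoupling.abs_integral_sub_le [IsFiniteMeasure p] [IsFiniteMeasure q]
    (hp : FiniteMomentR 1 p) (hq : FiniteMomentR 1 q) {γ : Measure (Y × Y)}
    (hγ : IsCoupling γ p q) (hf : LipschitzWith L f) :
    |∫ y, f y ∂p - ∫ y, f y ∂q| ≤ L * ∫ z, dist z.1 z.2 ∂γ := by
  have hf₁ := hγ.integrable_comp_fst (hp.integrable_of_lipschitzWith hf)
  have hf₂ := hγ.integrable_comp_snd (hq.integrable_of_lipschitzWith hf)
  rw [← hγ.integral_comp_fst hf.continuous.aestronglyMeasurable,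
    ← hγ.integral_comp_snd hf.continuous.aestronglyMeasurable, ← integral_sub hf₁ hf₂,
    ← integral_const_mul, ← Real.norm_eq_abs]
  refine norm_integral_le_of_norm_le ((hγ.integrable_dist hp hq).const_mul _)
    (ae_of_all _ fun z => ?_)
  rw [← dist_eq_norm]
  exact hf.dist_le_mul z.1 z.2

lemma abs_integral_sub_le_mul_wrPow (hp : MemPr 1 p) (hq : MemPr 1 q) (hf : LipschitzWith L f) :
    |∫ y, f y ∂p - ∫ y, f y ∂q| ≤ L * WrPow 1 p q := by
  have := hp.1; have := hq.1
  have hbound : ∀ v ∈ {v | ∃ γ : Measure (Y × Y), IsCoupling γ p q ∧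
      v = ∫ z, dist z.1 z.2 ^ (1 : ℝ) ∂γ}, |∫ y, f y ∂p - ∫ y, f y ∂q| ≤ L * v := by
    rintro v ⟨γ, hγ, rfl⟩
    simpa only [Real.rpow_one] using hγ.abs_integral_sub_le hp.2 hq.2 hf
  have hprod : IsCoupling (p.prod q) p q := by simp [IsCoupling]
  rcases L.coe_nonneg.eq_or_lt with hL | hL
  · simpa [← hL] using hbound _ ⟨_, hprod, rfl⟩
  · rw [← div_le_iff₀' hL]
    exact le_csInf ⟨_, _, hprod, rfl⟩ fun v hv => (div_le_iff₀' hL).2 (hbound v hv)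

lemma TendstoWr.tendsto_integral {pk : ℕ → Measure Y} (hpk : ∀ k, MemPr 1 (pk k))
    (hp : MemPr 1 p) (h : TendstoWr 1 pk p) (hf : LipschitzWith L f) :
    Tendsto (fun k => ∫ y, f y ∂(pk k)) atTop (𝓝 (∫ y, f y ∂p)) := by
  refine tendsto_iff_norm_sub_tendsto_zero.2 (squeeze_zero (fun _ => norm_nonneg _)
    (fun k => abs_integral_sub_le_mul_wrPow (hpk k) hp hf) ?_)
  simpa using h.const_mul (L : ℝ)

lemma TendstoWr.tendsto_probabilityMeasure {pk : ℕ → Measure Y} (hpk : ∀ k, MemPr 1 (pk k))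
    (hp : MemPr 1 p) (h : TendstoWr 1 pk p) :
    Tendsto (β := ProbabilityMeasure Y) (fun k => ⟨pk k, (hpk k).1⟩) atTop (𝓝 ⟨p, hp.1⟩) :=
  tendsto_iff_forall_lipschitz_integral_tendsto.2
    fun _ _ ⟨_, hf⟩ => h.tendsto_integral hpk hp hf

end Wasserstein

section WeakConvergence

variable {X ι : Type*} [TopologicalSpace X] [MeasurableSpace X] [OpensMeasurableSpace X]
  {l : Filter ι} {πs : ι → Measure X} {π : Measure X}

lemma eventually_lt_integral_of_nonneg
    (hweak : ∀ f : X →ᵇ ℝ, Tendsto (fun k => ∫ z, f z ∂(πs k)) l (𝓝 (∫ z, f z ∂π)))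
    {u : X → ℝ} (hu : Continuous u) (hu₀ : 0 ≤ u) (huπ : Integrable u π)
    (hus : ∀ k, Integrable u (πs k)) {c : ℝ} (hc : c < ∫ z, u z ∂π) :
    ∀ᶠ k in l, c < ∫ z, u z ∂(πs k) := by
  let uₙ : ℕ → X →ᵇ ℝ := fun n => .ofNormedAddCommGroup (fun z => min (u z) n)
    (hu.min continuous_const) n fun z => by
      rw [Real.norm_eq_abs, abs_of_nonneg (le_min (hu₀ z) n.cast_nonneg)]
      exact min_le_right _ _
  have huₙ_le : ∀ n z, |uₙ n z| ≤ u z := fun n z => by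
    change |min (u z) n| ≤ u z
    rw [abs_of_nonneg (le_min (hu₀ z) n.cast_nonneg)]
    exact min_le_left _ _
  have huₙ_int : ∀ (ρ : Measure X) (n : ℕ), Integrable u ρ → Integrable (uₙ n) ρ :=
    fun ρ n hρ => hρ.mono' (uₙ n).continuous.aestronglyMeasurable (ae_of_all _ (huₙ_le n))
  have htrunc : Tendsto (fun n => ∫ z, uₙ n z ∂π) atTop (𝓝 (∫ z, u z ∂π)) := by
    refine tendsto_integral_of_dominated_convergence u
      (fun n => (uₙ n).continuous.aestronglyMeasurable) huπ (fun n => ae_of_all _ (huₙ_le n))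
      (ae_of_all _ fun z => tendsto_const_nhds.congr' ?_)
    filter_upwards [eventually_ge_atTop ⌈u z⌉₊] with n hn
    exact (min_eq_left ((Nat.le_ceil _).trans (by exact_mod_cast hn))).symm
  obtain ⟨n, hn⟩ := (htrunc.eventually_const_lt hc).exists
  filter_upwards [(hweak (uₙ n)).eventually_const_lt hn] with k hk
  exact hk.trans_le (integral_mono (huₙ_int _ n (hus k)) (hus k) fun z => min_le_left _ _)

variable (hweak : ∀ f : X →ᵇ ℝ, Tendsto (fun k => ∫ z, f z ∂(πs k)) l (𝓝 (∫ z, f z ∂π)))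
  {φ : X → ℝ} (hφ : Continuous φ) (hφπ : Integrable φ π) (hφs : ∀ k, Integrable φ (πs k))
  (hφlim : Tendsto (fun k => ∫ z, φ z ∂(πs k)) l (𝓝 (∫ z, φ z ∂π)))
include hweak hφ hφπ hφs hφlim

lemma eventually_lt_integral_of_abs_le {h : X → ℝ} (hh : Continuous h) (hhφ : ∀ z, |h z| ≤ φ z)
    {a : ℝ} (ha : a < ∫ z, h z ∂π) : ∀ᶠ k in l, a < ∫ z, h z ∂(πs k) := by
  have hint : ∀ ρ : Measure X, Integrable φ ρ → Integrable h ρ :=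
    fun ρ hρ => hρ.mono' hh.aestronglyMeasurable (ae_of_all _ hhφ)
  set δ := ∫ z, h z ∂π - a
  have hδ : 0 < δ := sub_pos.2 ha
  have hsum : ∀ ρ : Measure X, Integrable φ ρ →
      ∫ z, (φ + h) z ∂ρ = ∫ z, φ z ∂ρ + ∫ z, h z ∂ρ :=
    fun ρ hρ => integral_add hρ (hint ρ hρ)
  have hlower : ∀ᶠ k in l, ∫ z, (φ + h) z ∂π - δ / 2 < ∫ z, (φ + h) z ∂(πs k) :=
    eventually_lt_integral_of_nonneg hweak (hφ.add hh)
      (fun z => show 0 ≤ φ z + h z by linarith [neg_le_of_abs_le (hhφ z)])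
      (hφπ.add (hint π hφπ)) (fun k => (hφs k).add (hint _ (hφs k))) (by linarith)
  filter_upwards [hlower, hφlim.eventually_lt_const (lt_add_of_pos_right _ (half_pos hδ))]
    with k hk hk'
  rw [hsum π hφπ, hsum _ (hφs k)] at hk
  linarith

lemma tendsto_integral_of_abs_le {h : X → ℝ} (hh : Continuous h) (hhφ : ∀ z, |h z| ≤ φ z) :
    Tendsto (fun k => ∫ z, h z ∂(πs k)) l (𝓝 (∫ z, h z ∂π)) := by
  refine tendsto_order.2
    ⟨fun a ha => eventually_lt_integral_of_abs_le hweak hφ hφπ hφs hφlim hh hhφ ha, fun b hb => ?_⟩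
  have hneg := eventually_lt_integral_of_abs_le hweak hφ hφπ hφs hφlim (h := fun z => -h z) hh.neg
    (fun z => (abs_neg (h z)).trans_le (hhφ z)) (a := -b) (by rwa [integral_neg, neg_lt_neg_iff])
  filter_upwards [hneg] with k hk
  rwa [integral_neg, neg_lt_neg_iff] at hk

end WeakConvergence

lemma MeasureTheory.ProbabilityMeasure.map_eq_of_tendsto {X Y ι : Type*} [TopologicalSpace X]
    [MeasurableSpace X] [OpensMeasurableSpace X] [TopologicalSpace Y] [MeasurableSpace Y]
    [HasOuterApproxClosed Y] [BorelSpace Y] {l : Filter ι} [l.NeBot] {Φ : X → Y}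
    (hΦ : Continuous Φ) {P : ι → ProbabilityMeasure X} {P₀ : ProbabilityMeasure X}
    {Q : ι → ProbabilityMeasure Y} {Q₀ : ProbabilityMeasure Y} (hP : Tendsto P l (𝓝 P₀))
    (hQ : Tendsto Q l (𝓝 Q₀)) (hPQ : ∀ k, (P k : Measure X).map Φ = Q k) :
    (P₀ : Measure X).map Φ = (Q₀ : Measure Y) :=
  congrArg ProbabilityMeasure.toMeasure <| tendsto_nhds_unique
    ((ProbabilityMeasure.tendsto_map_of_tendsto_of_continuous P P₀ hP hΦ).congr
      fun k => Subtype.ext (hPQ k)) hQ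

lemma MeasureTheory.Measure.compProd_eq_bind_map {α β : Type*} [MeasurableSpace α]
    [MeasurableSpace β] (μ : Measure α) [SFinite μ] (κ : Kernel α β) [IsSFiniteKernel κ] :
    μ ⊗ₘ κ = μ.bind fun x => (κ x).map (Prod.mk x) := by
  rw [Measure.compProd_eq_comp_prod]
  congr 1
  funext x
  rw [Kernel.prod_apply, Kernel.id_apply, Measure.dirac_prod]

section MartingaleCoupling

variable {μ ν : Measure ℝ} {π : Measure (ℝ × ℝ)}

lemma isMartCoupling_iff [SFinite μ] :
    IsMartCoupling μ ν π ↔ ∃ K : Kernel ℝ ℝ, IsMarkovKernel K ∧ π = μ ⊗ₘ K ∧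
      π.map Prod.snd = ν ∧ ∀ᵐ x ∂μ, ∫ y, y ∂(K x) = x := by
  constructor
  · rintro ⟨κ, hκ, hκ₁, hπ, hν, hbar⟩
    let K : Kernel ℝ ℝ := ⟨κ, hκ⟩
    have : IsMarkovKernel K := ⟨hκ₁⟩
    exact ⟨K, this, hπ.trans (Measure.compProd_eq_bind_map μ K).symm, hν, hbar⟩
  · rintro ⟨K, hK, hπ, hν, hbar⟩
    exact ⟨K, K.measurable, fun x => inferInstance, hπ.trans (Measure.compProd_eq_bind_map μ K),
      hν, hbar⟩

lemma MemPr.integrable_id {p : Measure ℝ} (hp : MemPr 1 p) : Integrable (fun x => x) p :=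
  have := hp.1
  hp.2.integrable_of_lipschitzWith LipschitzWith.id

lemma IsCoupling.integrable_sub (hμ : MemPr 1 μ) (hν : MemPr 1 ν) (hπ : IsCoupling π μ ν) :
    Integrable (fun z : ℝ × ℝ => z.2 - z.1) π :=
  (hπ.integrable_comp_snd hν.integrable_id).sub (hπ.integrable_comp_fst hμ.integrable_id)

lemma integral_mul_sub_compProd [SFinite μ] {K : Kernel ℝ ℝ} [IsSFiniteKernel K]
    (hint : Integrable (fun z : ℝ × ℝ => z.2 - z.1) (μ ⊗ₘ K)) (g : ℝ →ᵇ ℝ) :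
    ∫ z, g z.1 * (z.2 - z.1) ∂(μ ⊗ₘ K) = ∫ x, g x * ∫ y, (y - x) ∂(K x) ∂μ := by
  rw [Measure.integral_compProd (hint.bdd_mul (f := fun z => g z.1) (c := ‖g‖)
    (g.continuous.comp continuous_fst).aestronglyMeasurable
    (ae_of_all _ fun z => g.norm_coe_le_norm z.1))]
  simp_rw [integral_const_mul]

lemma ae_integral_sub_eq_zero_iff [SFinite μ] {K : Kernel ℝ ℝ} [IsMarkovKernel K]
    (hint : Integrable (fun z : ℝ × ℝ => z.2 - z.1) (μ ⊗ₘ K)) :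
    (∀ᵐ x ∂μ, ∫ y, (y - x) ∂(K x) = 0) ↔ ∀ᵐ x ∂μ, ∫ y, y ∂(K x) = x := by
  refine eventually_congr (((Measure.integrable_compProd_iff hint.aestronglyMeasurable).1
    hint).1.mono fun x hx => ?_)
  have hid : Integrable (fun y => y) (K x) :=
    (hx.add (integrable_const x)).congr (ae_of_all _ fun y => sub_add_cancel y x)
  rw [integral_sub hid (integrable_const x), integral_const, sub_eq_zero]
  simp

lemma IsMartCoupling.isCoupling [IsProbabilityMeasure μ] (h : IsMartCoupling μ ν π) :
    IsCoupling π μ ν := by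
  obtain ⟨K, hK, rfl, hν, -⟩ := isMartCoupling_iff.1 h
  exact ⟨Measure.fst_compProd μ K, hν⟩

lemma IsMartCoupling.integral_mul_sub_eq_zero (hμ : MemPr 1 μ) (hν : MemPr 1 ν)
    (h : IsMartCoupling μ ν π) (g : ℝ →ᵇ ℝ) : ∫ z, g z.1 * (z.2 - z.1) ∂π = 0 := by
  have := hμ.1
  have hπ := h.isCoupling
  obtain ⟨K, hK, rfl, -, hbar⟩ := isMartCoupling_iff.1 h
  have hint := hπ.integrable_sub hμ hν
  rw [integral_mul_sub_compProd hint, integral_eq_zero_of_ae]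
  filter_upwards [(ae_integral_sub_eq_zero_iff hint).2 hbar] with x hx
  simp [hx]

lemma isMartCoupling_of_integral_mul_sub_eq_zero [IsFiniteMeasure π] (hμ : MemPr 1 μ)
    (hν : MemPr 1 ν) (hπ : IsCoupling π μ ν)
    (h : ∀ g : ℝ →ᵇ ℝ, ∫ z, g z.1 * (z.2 - z.1) ∂π = 0) : IsMartCoupling μ ν π := by
  have := hμ.1
  obtain ⟨K, hK, rfl⟩ : ∃ K : Kernel ℝ ℝ, IsMarkovKernel K ∧ π = μ ⊗ₘ K :=
    ⟨π.condKernel, inferInstance, by rw [← hπ.1]; exact π.disintegrate π.condKernel |>.symm⟩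
  have hint := hπ.integrable_sub hμ hν
  refine isMartCoupling_iff.2 ⟨K, hK, rfl, hπ.2, (ae_integral_sub_eq_zero_iff hint).1 ?_⟩
  refine ae_eq_zero_of_integral_contDiff_smul_eq_zero ?_ fun g hg hgc => ?_
  · rw [Measure.compProd] at hint
    simpa using hint.integral_compProd.locallyIntegrable
  · obtain ⟨C, hC⟩ := hg.continuous.bounded_above_of_compact_support hgc
    let g' : ℝ →ᵇ ℝ := .ofNormedAddCommGroup g hg.continuous C hC
    exact (integral_mul_sub_compProd hint g').symm.trans (h g')

lemma IsCoupling.integrable_abs_add_abs (hμ : MemPr 1 μ) (hν : MemPr 1 ν)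
    (hπ : IsCoupling π μ ν) : Integrable (fun z : ℝ × ℝ => |z.1| + |z.2|) π :=
  (hπ.integrable_comp_fst hμ.integrable_id.abs).add (hπ.integrable_comp_snd hν.integrable_id.abs)

lemma IsCoupling.integral_abs_add_abs (hμ : MemPr 1 μ) (hν : MemPr 1 ν)
    (hπ : IsCoupling π μ ν) : ∫ z, |z.1| + |z.2| ∂π = ∫ x, |x| ∂μ + ∫ y, |y| ∂ν := by
  rw [integral_add (hπ.integrable_comp_fst hμ.integrable_id.abs)
    (hπ.integrable_comp_snd hν.integrable_id.abs),
    hπ.integral_comp_fst continuous_abs.aestronglyMeasurable,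
    hπ.integral_comp_snd continuous_abs.aestronglyMeasurable]

lemma tendsto_integral_mul_sub {μk νk : ℕ → Measure ℝ} {πk : ℕ → Measure (ℝ × ℝ)}
    (hμk : ∀ k, MemPr 1 (μk k)) (hνk : ∀ k, MemPr 1 (νk k)) (hμ : MemPr 1 μ) (hν : MemPr 1 ν)
    (hconvμ : TendstoWr 1 μk μ) (hconvν : TendstoWr 1 νk ν)
    (hπk : ∀ k, IsCoupling (πk k) (μk k) (νk k)) (hπ : IsCoupling π μ ν)
    (hweak : ∀ f : ℝ × ℝ →ᵇ ℝ, Tendsto (fun k => ∫ z, f z ∂(πk k)) atTop (𝓝 (∫ z, f z ∂π)))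
    (g : ℝ →ᵇ ℝ) :
    Tendsto (fun k => ∫ z, g z.1 * (z.2 - z.1) ∂(πk k)) atTop
      (𝓝 (∫ z, g z.1 * (z.2 - z.1) ∂π)) := by
  have hmoment : Tendsto (fun k => ∫ z, ‖g‖ * (|z.1| + |z.2|) ∂(πk k)) atTop
      (𝓝 (∫ z, ‖g‖ * (|z.1| + |z.2|) ∂π)) := by
    simp only [integral_const_mul, hπ.integral_abs_add_abs hμ hν,
      fun k => (hπk k).integral_abs_add_abs (hμk k) (hνk k)]
    exact ((hconvμ.tendsto_integral hμk hμ lipschitzWith_one_norm).add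
      (hconvν.tendsto_integral hνk hν lipschitzWith_one_norm)).const_mul _
  refine tendsto_integral_of_abs_le hweak (by fun_prop)
    ((hπ.integrable_abs_add_abs hμ hν).const_mul _)
    (fun k => ((hπk k).integrable_abs_add_abs (hμk k) (hνk k)).const_mul _) hmoment
    (by fun_prop) fun z => ?_
  rw [abs_mul]
  exact mul_le_mul (g.norm_coe_le_norm z.1) ((abs_sub _ _).trans_eq (add_comm _ _))
    (abs_nonneg _) (norm_nonneg _)

end MartingaleCoupling

/-- **The martingale property passes to the limit**: if `π_k ∈ Π_M(μ_k,ν_k)` with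
`μ_k → μ`, `ν_k → ν` in `W₁` and `π_k → π` weakly, then `π ∈ Π_M(μ,ν)`. -/
theorem martingale_property_limit
    (μk νk : ℕ → Measure ℝ) (μ ν : Measure ℝ)
    (hμk : ∀ k, MemPr 1 (μk k)) (hνk : ∀ k, MemPr 1 (νk k))
    (hμ : MemPr 1 μ) (hν : MemPr 1 ν)
    (hconvμ : TendstoWr 1 μk μ) (hconvν : TendstoWr 1 νk ν)
    (πk : ℕ → Measure (ℝ × ℝ))
    (hπk : ∀ k, IsMartCoupling (μk k) (νk k) (πk k))
    (π : Measure (ℝ × ℝ)) (hπ : IsProbabilityMeasure π)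
    (hweak : ∀ f : BoundedContinuousFunction (ℝ × ℝ) ℝ,
      Tendsto (fun k => ∫ z, f z ∂(πk k)) atTop (nhds (∫ z, f z ∂π))) :
    IsMartCoupling μ ν π := by
  have hcoupling : ∀ k, IsCoupling (πk k) (μk k) (νk k) :=
    fun k => have := (hμk k).1; (hπk k).isCoupling
  have hprob : ∀ k, IsProbabilityMeasure (πk k) :=
    fun k => have := (hμk k).1; (hcoupling k).isProbabilityMeasure
  have hP : Tendsto (β := ProbabilityMeasure (ℝ × ℝ)) (fun k => ⟨πk k, hprob k⟩) atTop
      (𝓝 ⟨π, hπ⟩) := ProbabilityMeasure.tendsto_iff_forall_integral_tendsto.2 hweak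
  have hπ_coupling : IsCoupling π μ ν :=
    ⟨ProbabilityMeasure.map_eq_of_tendsto continuous_fst hP
      (hconvμ.tendsto_probabilityMeasure hμk hμ) fun k => (hcoupling k).1,
     ProbabilityMeasure.map_eq_of_tendsto continuous_snd hP
      (hconvν.tendsto_probabilityMeasure hνk hν) fun k => (hcoupling k).2⟩
  refine isMartCoupling_of_integral_mul_sub_eq_zero hμ hν hπ_coupling fun g => ?_
  refine tendsto_nhds_unique (tendsto_integral_mul_sub hμk hνk hμ hν hconvμ hconvν hcoupling
    hπ_coupling hweak g) ?_
  simp only [fun k => (hπk k).integral_mul_sub_eq_zero (hμk k) (hνk k) g, tendsto_const_nhds]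
end
end

section
/- Let $X$ be a Polish space and $P \in \mathcal{P}(X)$. Suppose for each $N\in\mathbb{N}$ the $N$-fold product $P^{\otimes N}$ is concentrated on a closed set $\Gamma_N \subset X^N$. Then there exists a single closed set $\Gamma \subset X$ with $P(\Gamma) = 1$ and $\Gamma^N \subset \Gamma_N$ for all $N\in\mathbb{N}$. -/
/-!
Take `Γ` to be the support of `P`, which is closed and `P`-conull since `X` is second countable.
A point of `Γ^N` has every box neighbourhood of positive `P^{⊗N}`-measure, so it lies in the
support of `P^{⊗N}`, and that support is contained in every closed conull set, such as `Γ_N`.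
-/

open MeasureTheory Filter Topology

noncomputable section

namespace MeasureTheory.Measure

theorem pi_univ_support_subset_support_pi {ι : Type*} [Fintype ι] {X : ι → Type*}
    [∀ i, MeasurableSpace (X i)] [∀ i, TopologicalSpace (X i)]
    (μ : ∀ i, Measure (X i)) [∀ i, SigmaFinite (μ i)] :
    Set.univ.pi (fun i ↦ (μ i).support) ⊆ (Measure.pi μ).support := by
  intro x hx
  rw [mem_support_iff_forall]
  intro U hU
  rw [nhds_pi, mem_pi'] at hU
  obtain ⟨I, t, ht, hsub⟩ := hU
  have hbox : Set.univ.pi t ⊆ U :=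
    (Set.pi_mono' (fun _ _ ↦ subset_rfl) (Set.subset_univ _)).trans hsub
  calc 0 < ∏ i, μ i (t i) := CanonicallyOrderedAdd.prod_pos.2 fun i _ ↦
        (mem_support_iff_forall _).1 (hx i trivial) _ (ht i)
    _ = Measure.pi μ (Set.univ.pi t) := (pi_pi μ t).symm
    _ ≤ Measure.pi μ U := measure_mono hbox

end MeasureTheory.Measure

/-- **Concentration on a single closed set** (used in the proof of Theorem 2.6):
if for every `N` the `N`-fold product `P^{⊗N}` of a probability measure `P` on a
Polish space is concentrated on a closed set `Γ_N ⊆ X^N`, then there is a single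
closed set `Γ ⊆ X` with `P(Γ) = 1` and `Γ^N ⊆ Γ_N` for all `N`. -/
theorem product_concentration_closed {X : Type*}
    [MeasurableSpace X] [TopologicalSpace X] [PolishSpace X] [BorelSpace X]
    (P : Measure X) [IsProbabilityMeasure P]
    (Γn : (N : ℕ) → Set (Fin N → X))
    (hclosed : ∀ N, IsClosed (Γn N))
    (hconc : ∀ N, Measure.pi (fun _ : Fin N => P) (Γn N) = 1) :
    ∃ Γ : Set X, IsClosed Γ ∧ P Γ = 1 ∧
      ∀ N, {g : Fin N → X | ∀ i, g i ∈ Γ} ⊆ Γn N := by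
  refine ⟨P.support, Measure.isClosed_support,
    (mem_ae_iff_prob_eq_one₀ Measure.nullMeasurableSet_support).1 Measure.support_mem_ae,
    fun N g hg ↦ ?_⟩
  have hconc_ae : Γn N ∈ ae (Measure.pi fun _ : Fin N ↦ P) :=
    (mem_ae_iff_prob_eq_one (hclosed N).measurableSet).2 (hconc N)
  exact Measure.support_subset_of_isClosed (hclosed N) hconc_ae
    (Measure.pi_univ_support_subset_support_pi _ fun i _ ↦ hg i)
end
end
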